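/- Let λ ∈ ℂ with Re λ ≥ 1/2 and let v ∈ C^∞[0,1] solve the dual eigenvalue equation −(1−ρ²)v''(ρ) − (2(1−ρ²)/ρ)v'(ρ) + 2λρv'(ρ) + (Ṽ(ρ)/ρ²)v(ρ) + λ(λ+1)v(ρ) = 0 on (0,1), where Ṽ(ρ) = (6−2ρ²)/(1+ρ²). If v(1) = 0 then v vanishes identically on [0,1]. -/

import Mathlib

/-!
Multiplying the equation by `ρ²(1+ρ²)` turns it into `P v'' + Q v' + R v = 0` with polynomial
coefficients, where `P = -ρ²(1-ρ⁴)` has a simple zero at `ρ = 1` with `P'(1) = 4`, and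
`Q(1) = 4λ`. Differentiating `k` times and evaluating at `1` gives `(4k + 4λ) v^{(k+1)}(1) = 0`
once the lower derivatives vanish there; since `Re λ ≥ 1/2` none of these coefficients is zero,
so `v(1) = 0` makes `v` flat at `1`.

On `[a, 1]` with `a > 0` we have `|P| ≥ a²(1-ρ)`, hence `(1-ρ)|v''| ≤ K(|v| + |v'|)`. Flatness
gives `|v'| ≤ C(1-ρ)^{n+1}` for every `n`; once `n + 1 > 2K`, integrating twice from `1` improves
this to `|v'| ≤ (2K/(n+1)) C (1-ρ)^{n+1}`. Iterating gives `v' = 0`, so `v = 0` on `[a, 1]`, and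
on `[0, 1]` by continuity.
-/

/-- The dual potential `Ṽ(ρ) = (6−2ρ²)/(1+ρ²)`. -/
noncomputable def Vdual (ρ : ℝ) : ℝ := (6 - 2 * ρ ^ 2) / (1 + ρ ^ 2)

open Set Filter Topology MeasureTheory intervalIntegral Finset

section IteratedDerivWithin

variable {𝕜 : Type*} [NontriviallyNormedField 𝕜] {F : Type*} [NormedAddCommGroup F]
  [NormedSpace 𝕜 F] {s : Set 𝕜}

theorem iteratedDerivWithin_iteratedDerivWithin (i j : ℕ) (f : 𝕜 → F) :
    iteratedDerivWithin i (iteratedDerivWithin j f s) s = iteratedDerivWithin (i + j) f s := by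
  induction i with
  | zero => simp
  | succ i ih => rw [iteratedDerivWithin_succ, ih, ← iteratedDerivWithin_succ, Nat.succ_add]

theorem ContDiffOn.iteratedDerivWithin_top {f : 𝕜 → F} (hf : ContDiffOn 𝕜 (⊤ : ℕ∞) f s)
    (hs : UniqueDiffOn 𝕜 s) (k : ℕ) : ContDiffOn 𝕜 (⊤ : ℕ∞) (iteratedDerivWithin k f s) s := by
  induction k with
  | zero => simpa
  | succ k ih => simpa only [iteratedDerivWithin_succ] using ih.derivWithin hs (by simp)

theorem ContDiffOn.hasDerivAt_iteratedDerivWithin {f : 𝕜 → F} (hf : ContDiffOn 𝕜 (⊤ : ℕ∞) f s)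
    (hs : UniqueDiffOn 𝕜 s) {x : 𝕜} (hx : s ∈ 𝓝 x) (k : ℕ) :
    HasDerivAt (iteratedDerivWithin k f s) (iteratedDerivWithin (k + 1) f s x) x := by
  rw [iteratedDerivWithin_succ]
  exact (((hf.iteratedDerivWithin_top hs k).differentiableOn (by simp)) x
    (mem_of_mem_nhds hx)).hasDerivWithinAt.hasDerivAt hx

end IteratedDerivWithin

section RegularSingularPoint

variable {𝕜 : Type*} [NontriviallyNormedField 𝕜] {𝕜' : Type*} [NormedField 𝕜']
  [NormedAlgebra 𝕜 𝕜'] {s : Set 𝕜} {x₀ : 𝕜} {P Q R v : 𝕜 → 𝕜'}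

theorem iteratedDerivWithin_mul_iteratedDerivWithin (hs : UniqueDiffOn 𝕜 s) (hx₀ : x₀ ∈ s)
    (hP : ContDiffOn 𝕜 (⊤ : ℕ∞) P s) (hv : ContDiffOn 𝕜 (⊤ : ℕ∞) v s) (k j : ℕ) :
    iteratedDerivWithin k (fun x => P x * iteratedDerivWithin j v s x) s x₀ =
      ∑ i ∈ range (k + 1),
        k.choose i * iteratedDerivWithin i P s x₀ * iteratedDerivWithin (k - i + j) v s x₀ := by
  simp only [← iteratedDerivWithin_iteratedDerivWithin]
  exact iteratedDerivWithin_mul hx₀ hs ((hP.contDiffWithinAt hx₀).of_le (mod_cast le_top))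
    (((hv.iteratedDerivWithin_top hs j).contDiffWithinAt hx₀).of_le (mod_cast le_top))

theorem indicial_mul_iteratedDerivWithin_eq_zero {p : 𝕜'} (hs : UniqueDiffOn 𝕜 s) (hx₀ : x₀ ∈ s)
    (hP : ContDiffOn 𝕜 (⊤ : ℕ∞) P s) (hQ : ContDiffOn 𝕜 (⊤ : ℕ∞) Q s)
    (hR : ContDiffOn 𝕜 (⊤ : ℕ∞) R s) (hv : ContDiffOn 𝕜 (⊤ : ℕ∞) v s)
    (hode : EqOn (fun x => P x * iteratedDerivWithin 2 v s x + Q x * iteratedDerivWithin 1 v s x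
      + R x * v x) 0 s)
    (hP₀ : P x₀ = 0) (hp : HasDerivWithinAt P p s x₀) {k : ℕ}
    (hlow : ∀ m ≤ k, iteratedDerivWithin m v s x₀ = 0) :
    ((k : 𝕜') * p + Q x₀) * iteratedDerivWithin (k + 1) v s x₀ = 0 := by
  have hE : EqOn (fun x => P x * iteratedDerivWithin 2 v s x + Q x * iteratedDerivWithin 1 v s x
      + R x * iteratedDerivWithin 0 v s x) 0 s := by simpa using hode
  have hdiff {A : 𝕜 → 𝕜'} (hA : ContDiffOn 𝕜 (⊤ : ℕ∞) A s) (j : ℕ) :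
      ContDiffWithinAt 𝕜 k (fun x => A x * iteratedDerivWithin j v s x) s x₀ :=
    ((hA.mul (hv.iteratedDerivWithin_top hs j)).contDiffWithinAt hx₀).of_le (mod_cast le_top)
  have hsum := iteratedDerivWithin_congr (n := k) hE hx₀
  rw [iteratedDerivWithin_fun_add hx₀ hs ((hdiff hP 2).add (hdiff hQ 1)) (hdiff hR 0),
    iteratedDerivWithin_fun_add hx₀ hs (hdiff hP 2) (hdiff hQ 1),
    iteratedDerivWithin_mul_iteratedDerivWithin hs hx₀ hP hv,
    iteratedDerivWithin_mul_iteratedDerivWithin hs hx₀ hQ hv,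
    iteratedDerivWithin_mul_iteratedDerivWithin hs hx₀ hR hv] at hsum
  have hPterm : ∑ i ∈ range (k + 1),
      k.choose i * iteratedDerivWithin i P s x₀ * iteratedDerivWithin (k - i + 2) v s x₀
      = k * p * iteratedDerivWithin (k + 1) v s x₀ := by
    rw [sum_eq_single 1]
    · rw [Nat.choose_one_right, iteratedDerivWithin_one, hp.derivWithin (hs x₀ hx₀)]
      obtain _ | k := k <;> simp
    · intro i hi hi1
      obtain _ | i := i
      · simp [hP₀]
      · rw [hlow _ (by grind), mul_zero]
    · intro h1
      simp_all
  have hQterm : ∑ i ∈ range (k + 1),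
      k.choose i * iteratedDerivWithin i Q s x₀ * iteratedDerivWithin (k - i + 1) v s x₀
      = Q x₀ * iteratedDerivWithin (k + 1) v s x₀ := by
    rw [sum_eq_single 0]
    · simp
    · intro i hi hi0
      rw [hlow _ (by grind), mul_zero]
    · simp
  have hRterm : ∑ i ∈ range (k + 1),
      k.choose i * iteratedDerivWithin i R s x₀ * iteratedDerivWithin (k - i + 0) v s x₀ = 0 :=
    sum_eq_zero fun i _ => by rw [hlow _ (by omega), mul_zero]
  rw [hPterm, hQterm, hRterm] at hsum
  simpa [add_mul] using hsum

theorem iteratedDerivWithin_eq_zero_of_ode {p : 𝕜'} (hs : UniqueDiffOn 𝕜 s) (hx₀ : x₀ ∈ s)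
    (hP : ContDiffOn 𝕜 (⊤ : ℕ∞) P s) (hQ : ContDiffOn 𝕜 (⊤ : ℕ∞) Q s)
    (hR : ContDiffOn 𝕜 (⊤ : ℕ∞) R s) (hv : ContDiffOn 𝕜 (⊤ : ℕ∞) v s)
    (hode : EqOn (fun x => P x * iteratedDerivWithin 2 v s x + Q x * iteratedDerivWithin 1 v s x
      + R x * v x) 0 s)
    (hP₀ : P x₀ = 0) (hp : HasDerivWithinAt P p s x₀) (hres : ∀ k : ℕ, (k : 𝕜') * p + Q x₀ ≠ 0)
    (hv₀ : v x₀ = 0) (k : ℕ) : iteratedDerivWithin k v s x₀ = 0 := by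
  induction k using Nat.strong_induction_on with
  | _ k ih =>
  obtain _ | k := k
  · simpa using hv₀
  exact (mul_eq_zero.mp (indicial_mul_iteratedDerivWithin_eq_zero hs hx₀ hP hQ hR hv hode hP₀ hp
    fun m hm => ih m (Nat.lt_succ_of_le hm))).resolve_left (hres k)

end RegularSingularPoint

section FlatAtEndpoint

variable {E : Type*} [NormedAddCommGroup E] [NormedSpace ℝ E] [CompleteSpace E]

theorem norm_le_of_norm_deriv_le_pow {φ φ' : ℝ → E} {a b M x : ℝ} {n : ℕ}
    (hφ : ContinuousOn φ (Icc a b)) (hφ' : ∀ y ∈ Ioo a b, HasDerivAt φ (φ' y) y)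
    (hφ'c : ContinuousOn φ' (Icc a b)) (hb : φ b = 0)
    (hbound : ∀ y ∈ Ioo a b, ‖φ' y‖ ≤ M * (b - y) ^ n) (hx : x ∈ Icc a b) :
    ‖φ x‖ ≤ M * (b - x) ^ (n + 1) / (n + 1) :=
  have hsub : Icc x b ⊆ Icc a b := Icc_subset_Icc_left hx.1
  calc ‖φ x‖ = ‖∫ y in x..b, φ' y‖ := by
        rw [integral_eq_sub_of_hasDerivAt_of_le hx.2 (hφ.mono hsub)
          (fun y hy => hφ' y ⟨hx.1.trans_lt hy.1, hy.2⟩)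
          ((hφ'c.mono hsub).intervalIntegrable_of_Icc hx.2), hb, zero_sub, norm_neg]
    _ ≤ ∫ y in x..b, M * (b - y) ^ n := by
        refine norm_integral_le_of_norm_le hx.2 ?_
          ((by fun_prop : Continuous fun y => M * (b - y) ^ n).intervalIntegrable _ _)
        filter_upwards [volume.ae_ne b] with y hyb hy
        exact hbound y ⟨hx.1.trans_lt hy.1, lt_of_le_of_ne hy.2 hyb⟩
    _ = M * (b - x) ^ (n + 1) / (n + 1) := by
        simp only [intervalIntegral.integral_const_mul, integral_comp_sub_left fun y => y ^ n,
          sub_self, integral_pow]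
        ring

variable {f g h : ℝ → E} {a b K : ℝ} {n : ℕ}

theorem norm_le_of_degenerate_ode_of_norm_le (hba : b - a ≤ 1)
    (hf : ContinuousOn f (Icc a b)) (hg : ContinuousOn g (Icc a b))
    (hh : ContinuousOn h (Icc a b)) (hf' : ∀ x ∈ Ioo a b, HasDerivAt f (g x) x)
    (hg' : ∀ x ∈ Ioo a b, HasDerivAt g (h x) x) (hfb : f b = 0) (hgb : g b = 0) (hK : 0 ≤ K)
    (hdeg : ∀ x ∈ Ioo a b, (b - x) * ‖h x‖ ≤ K * (‖f x‖ + ‖g x‖))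
    {C : ℝ} (hC : 0 ≤ C) (hgC : ∀ x ∈ Icc a b, ‖g x‖ ≤ C * (b - x) ^ (n + 1))
    {x : ℝ} (hx : x ∈ Icc a b) :
    ‖g x‖ ≤ 2 * K / (n + 1) * C * (b - x) ^ (n + 1) := by
  have hfC : ∀ y ∈ Ioo a b, ‖f y‖ ≤ C * (b - y) ^ (n + 1) := fun y hy => by
    have hby : 0 ≤ b - y := by linarith [hy.2]
    calc ‖f y‖ ≤ C * (b - y) ^ (n + 1 + 1) / ((n + 1 : ℕ) + 1) :=
          norm_le_of_norm_deriv_le_pow hf hf' hg hfb (fun z hz => hgC z (Ioo_subset_Icc_self hz))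
            (Ioo_subset_Icc_self hy)
      _ ≤ C * (b - y) ^ (n + 1 + 1) :=
          div_le_self (by positivity) (by push_cast; linarith [(n.cast_nonneg : (0 : ℝ) ≤ n)])
      _ ≤ C * (b - y) ^ (n + 1) := mul_le_mul_of_nonneg_left
          (pow_le_pow_of_le_one hby (by linarith [hy.1]) (Nat.le_succ _)) hC
  have hhC : ∀ y ∈ Ioo a b, ‖h y‖ ≤ 2 * K * C * (b - y) ^ n := fun y hy => by
    have hby : 0 < b - y := by linarith [hy.2]
    refine le_of_mul_le_mul_left ?_ hby
    calc (b - y) * ‖h y‖ ≤ K * (‖f y‖ + ‖g y‖) := hdeg y hy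
      _ ≤ K * (C * (b - y) ^ (n + 1) + C * (b - y) ^ (n + 1)) :=
          by gcongr; exacts [hfC y hy, hgC y (Ioo_subset_Icc_self hy)]
      _ = (b - y) * (2 * K * C * (b - y) ^ n) := by ring
  calc ‖g x‖ ≤ 2 * K * C * (b - x) ^ (n + 1) / (n + 1) :=
        norm_le_of_norm_deriv_le_pow hg hg' hh hgb hhC hx
    _ = 2 * K / (n + 1) * C * (b - x) ^ (n + 1) := by ring

theorem eqOn_zero_of_degenerate_ode (hba : b - a ≤ 1)
    (hf : ContinuousOn f (Icc a b)) (hg : ContinuousOn g (Icc a b))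
    (hh : ContinuousOn h (Icc a b)) (hf' : ∀ x ∈ Ioo a b, HasDerivAt f (g x) x)
    (hg' : ∀ x ∈ Ioo a b, HasDerivAt g (h x) x) (hfb : f b = 0) (hgb : g b = 0) (hK : 0 ≤ K)
    (hdeg : ∀ x ∈ Ioo a b, (b - x) * ‖h x‖ ≤ K * (‖f x‖ + ‖g x‖)) (hn : 2 * K < n + 1)
    {C : ℝ} (hC : 0 ≤ C) (hflat : ∀ x ∈ Icc a b, ‖g x‖ ≤ C * (b - x) ^ (n + 1)) :
    EqOn f 0 (Icc a b) := by
  set r := 2 * K / (n + 1)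
  have hr0 : 0 ≤ r := by positivity
  have hr1 : r < 1 := (div_lt_one (by positivity)).mpr hn
  have hiter (m : ℕ) : ∀ x ∈ Icc a b, ‖g x‖ ≤ C * r ^ m * (b - x) ^ (n + 1) := by
    induction m with
    | zero => simpa using hflat
    | succ m ih =>
      intro x hx
      calc ‖g x‖ ≤ r * (C * r ^ m) * (b - x) ^ (n + 1) :=
            norm_le_of_degenerate_ode_of_norm_le hba hf hg hh hf' hg' hfb hgb hK hdeg
              (by positivity) ih hx
        _ = C * r ^ (m + 1) * (b - x) ^ (n + 1) := by ring
  have hg0 : ∀ x ∈ Icc a b, g x = 0 := fun x hx => by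
    have hlim : Tendsto (fun m : ℕ => C * r ^ m * (b - x) ^ (n + 1)) atTop (𝓝 0) := by
      simpa using ((tendsto_pow_atTop_nhds_zero_of_lt_one hr0 hr1).const_mul C).mul_const _
    exact norm_le_zero_iff.mp (ge_of_tendsto' hlim fun m => hiter m x hx)
  intro x hx
  have := norm_le_of_norm_deriv_le_pow (M := 0) (n := 0) hf hf' hg hfb
    (fun y hy => by simp [hg0 y (Ioo_subset_Icc_self hy)]) hx
  simpa using this

theorem norm_le_div_factorial_mul_pow_of_flat {w : ℕ → ℝ → E} {a b M : ℝ}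
    (hw : ∀ k, ContinuousOn (w k) (Icc a b))
    (hw' : ∀ k, ∀ x ∈ Ioo a b, HasDerivAt (w k) (w (k + 1) x) x) (hb : ∀ k, w k b = 0)
    (m i : ℕ) (hM : ∀ x ∈ Icc a b, ‖w (m + i) x‖ ≤ M) {x : ℝ} (hx : x ∈ Icc a b) :
    ‖w m x‖ ≤ M / i.factorial * (b - x) ^ i := by
  induction i generalizing m x with
  | zero => simpa using hM x hx
  | succ i ih =>
    calc ‖w m x‖ ≤ M / i.factorial * (b - x) ^ (i + 1) / (i + 1) :=
          norm_le_of_norm_deriv_le_pow (hw m) (hw' m) (hw (m + 1)) (hb m)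
            (fun y hy => ih (m + 1) (by simpa only [Nat.add_right_comm, Nat.add_assoc] using hM)
              (Ioo_subset_Icc_self hy)) hx
      _ = M / (i + 1).factorial * (b - x) ^ (i + 1) := by
          rw [Nat.factorial_succ]; push_cast; field_simp

end FlatAtEndpoint

@[fun_prop]
theorem Complex.contDiff_ofReal {n : WithTop ℕ∞} : ContDiff ℝ n ((↑) : ℝ → ℂ) :=
  Complex.ofRealCLM.contDiff

-- The coefficients of the equation multiplied by `ρ²(1+ρ²)`, which clears its denominators.
noncomputable def dualP (ρ : ℝ) : ℂ := -(ρ : ℂ) ^ 2 * (1 - (ρ : ℂ) ^ 4)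

noncomputable def dualQ (lam : ℂ) (ρ : ℝ) : ℂ :=
  2 * lam * (ρ : ℂ) ^ 3 * (1 + (ρ : ℂ) ^ 2) - 2 * ρ * (1 - (ρ : ℂ) ^ 4)

noncomputable def dualR (lam : ℂ) (ρ : ℝ) : ℂ :=
  6 - 2 * (ρ : ℂ) ^ 2 + lam * (lam + 1) * (ρ : ℂ) ^ 2 * (1 + (ρ : ℂ) ^ 2)

theorem contDiff_dualP : ContDiff ℝ (⊤ : ℕ∞) dualP := by
  unfold dualP; fun_prop

theorem contDiff_dualQ (lam : ℂ) : ContDiff ℝ (⊤ : ℕ∞) (dualQ lam) := by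
  unfold dualQ; fun_prop

theorem contDiff_dualR (lam : ℂ) : ContDiff ℝ (⊤ : ℕ∞) (dualR lam) := by
  unfold dualR; fun_prop

theorem hasDerivAt_dualP_one : HasDerivAt dualP 4 1 := by
  have := ((hasDerivAt_pow 2 (1 : ℂ)).neg.mul ((hasDerivAt_const (1 : ℂ) (1 : ℂ)).sub
    (hasDerivAt_pow 4 (1 : ℂ)))).comp_ofReal (z := 1)
  convert this using 1
  · ext; simp [dualP]
  · norm_num

theorem norm_dualP_ge {a x : ℝ} (ha : 0 ≤ a) (hx : x ∈ Icc a 1) : a ^ 2 * (1 - x) ≤ ‖dualP x‖ := by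
  have hreal : dualP x = ((-(x ^ 2 * (1 - x ^ 4)) : ℝ) : ℂ) := by simp [dualP]
  rw [hreal, Complex.norm_real, norm_neg, Real.norm_eq_abs]
  obtain ⟨hax, hx1⟩ := hx
  have hx0 : 0 ≤ x := ha.trans hax
  have hfactor : x ^ 2 * (1 - x ^ 4) = x ^ 2 * (1 - x) * ((1 + x) * (1 + x ^ 2)) := by ring
  rw [hfactor, abs_of_nonneg (by bound)]
  calc a ^ 2 * (1 - x) ≤ x ^ 2 * (1 - x) * 1 := by rw [mul_one]; gcongr
    _ ≤ x ^ 2 * (1 - x) * ((1 + x) * (1 + x ^ 2)) := by gcongr; nlinarith [sq_nonneg x]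

theorem iteratedDerivWithin_Icc_eq_iteratedDeriv {F : Type*} [NormedAddCommGroup F]
    [NormedSpace ℝ F] {v : ℝ → F} {a b x : ℝ}
    (hv : ContDiffOn ℝ (⊤ : ℕ∞) v (Icc a b)) (hx : x ∈ Ioo a b) (k : ℕ) :
    iteratedDerivWithin k v (Icc a b) x = iteratedDeriv k v x :=
  iteratedDerivWithin_eq_iteratedDeriv (uniqueDiffOn_Icc (hx.1.trans hx.2))
    ((hv.contDiffAt (Icc_mem_nhds hx.1 hx.2)).of_le (mod_cast le_top)) (Ioo_subset_Icc_self hx)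

theorem dual_ode_polynomial_form {lam : ℂ} {v : ℝ → ℂ} (hv : ContDiffOn ℝ (⊤ : ℕ∞) v (Icc 0 1))
    (hode : ∀ ρ ∈ Set.Ioo (0:ℝ) 1,
      -(1 - (ρ:ℂ) ^ 2) * deriv (deriv v) ρ
      - (2 * (1 - (ρ:ℂ) ^ 2) / (ρ:ℂ)) * deriv v ρ
      + 2 * lam * (ρ:ℂ) * deriv v ρ
      + (((Vdual ρ : ℝ) : ℂ) / (ρ:ℂ) ^ 2) * v ρ
      + lam * (lam + 1) * v ρ = 0) :
    EqOn (fun x => dualP x * iteratedDerivWithin 2 v (Icc 0 1) x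
      + dualQ lam x * iteratedDerivWithin 1 v (Icc 0 1) x + dualR lam x * v x) 0 (Icc 0 1) := by
  have hs : UniqueDiffOn ℝ (Icc (0 : ℝ) 1) := uniqueDiffOn_Icc zero_lt_one
  have hw (k : ℕ) : ContinuousOn (iteratedDerivWithin k v (Icc 0 1)) (Icc 0 1) :=
    hv.continuousOn_iteratedDerivWithin (mod_cast le_top) hs
  refine EqOn.of_subset_closure (s := Ioo 0 1) ?_ ?_ continuousOn_const Ioo_subset_Icc_self
    (by rw [closure_Ioo zero_ne_one])
  · intro x hx
    have hx0 : (x : ℂ) ≠ 0 := Complex.ofReal_ne_zero.mpr hx.1.ne'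
    have hx1 : 1 + (x : ℂ) ^ 2 ≠ 0 := by exact_mod_cast (by positivity : (1 + x ^ 2 : ℝ) ≠ 0)
    have h := hode x hx
    simp only [Vdual, Complex.ofReal_div] at h
    push_cast at h
    field_simp at h
    simp only [iteratedDerivWithin_Icc_eq_iteratedDeriv hv hx, iteratedDeriv_succ,
      iteratedDeriv_zero, Pi.zero_apply, dualP, dualQ, dualR]
    linear_combination h
  · exact ((contDiff_dualP.continuous.continuousOn.mul (hw 2)).add
      ((contDiff_dualQ lam).continuous.continuousOn.mul (hw 1))).add
      ((contDiff_dualR lam).continuous.continuousOn.mul hv.continuousOn)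

theorem one_sub_mul_norm_le_of_dual_ode {lam : ℂ} {a x MQ MR : ℝ} {y₀ y₁ y₂ : ℂ} (ha : 0 < a)
    (hx : x ∈ Icc a 1) (hQ : ‖dualQ lam x‖ ≤ MQ) (hR : ‖dualR lam x‖ ≤ MR)
    (h : dualP x * y₂ + dualQ lam x * y₁ + dualR lam x * y₀ = 0) :
    (1 - x) * ‖y₂‖ ≤ (MQ + MR) / a ^ 2 * (‖y₀‖ + ‖y₁‖) := by
  have hMQ : 0 ≤ MQ := (norm_nonneg _).trans hQ
  have hMR : 0 ≤ MR := (norm_nonneg _).trans hR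
  have hPy : dualP x * y₂ = -(dualQ lam x * y₁ + dualR lam x * y₀) := by linear_combination h
  rw [div_mul_eq_mul_div, le_div_iff₀ (by positivity)]
  calc (1 - x) * ‖y₂‖ * a ^ 2 = a ^ 2 * (1 - x) * ‖y₂‖ := by ring
    _ ≤ ‖dualP x‖ * ‖y₂‖ := by gcongr; exact norm_dualP_ge ha.le hx
    _ = ‖dualQ lam x * y₁ + dualR lam x * y₀‖ := by rw [← norm_mul, hPy, norm_neg]
    _ ≤ ‖dualQ lam x‖ * ‖y₁‖ + ‖dualR lam x‖ * ‖y₀‖ := by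
        rw [← norm_mul, ← norm_mul]; exact norm_add_le _ _
    _ ≤ MQ * ‖y₁‖ + MR * ‖y₀‖ := by gcongr
    _ ≤ (MQ + MR) * (‖y₀‖ + ‖y₁‖) := by nlinarith [norm_nonneg y₀, norm_nonneg y₁]

theorem dual_eqOn_zero_of_flat {lam : ℂ} {v : ℝ → ℂ} (hv : ContDiffOn ℝ (⊤ : ℕ∞) v (Icc 0 1))
    (hpoly : EqOn (fun x => dualP x * iteratedDerivWithin 2 v (Icc 0 1) x
      + dualQ lam x * iteratedDerivWithin 1 v (Icc 0 1) x + dualR lam x * v x) 0 (Icc 0 1))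
    (hflat : ∀ k, iteratedDerivWithin k v (Icc 0 1) 1 = 0) {a : ℝ} (ha : 0 < a) (ha1 : a ≤ 1) :
    EqOn v 0 (Icc a 1) := by
  set w : ℕ → ℝ → ℂ := fun k => iteratedDerivWithin k v (Icc 0 1)
  have hsub : Icc a 1 ⊆ Icc (0 : ℝ) 1 := Icc_subset_Icc_left ha.le
  have hs : UniqueDiffOn ℝ (Icc (0 : ℝ) 1) := uniqueDiffOn_Icc zero_lt_one
  have hw (k : ℕ) : ContinuousOn (w k) (Icc a 1) :=
    (hv.continuousOn_iteratedDerivWithin (mod_cast le_top) hs).mono hsub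
  have hw' (k : ℕ) : ∀ x ∈ Ioo a 1, HasDerivAt (w k) (w (k + 1) x) x := fun x hx =>
    hv.hasDerivAt_iteratedDerivWithin hs (Icc_mem_nhds (ha.trans hx.1) hx.2) k
  have h1 : (1 : ℝ) ∈ Icc a 1 := ⟨ha1, le_rfl⟩
  obtain ⟨MQ, hMQ⟩ := isCompact_Icc.exists_bound_of_continuousOn
    (contDiff_dualQ lam).continuous.continuousOn (s := Icc a 1)
  obtain ⟨MR, hMR⟩ := isCompact_Icc.exists_bound_of_continuousOn
    (contDiff_dualR lam).continuous.continuousOn (s := Icc a 1)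
  set K := (MQ + MR) / a ^ 2
  have hK : 0 ≤ K := by
    have := (norm_nonneg _).trans (hMQ 1 h1)
    have := (norm_nonneg _).trans (hMR 1 h1)
    positivity
  set n := ⌈2 * K⌉₊
  obtain ⟨M, hM⟩ := isCompact_Icc.exists_bound_of_continuousOn (hw (n + 2))
  have hM0 : 0 ≤ M := (norm_nonneg _).trans (hM 1 h1)
  have hv' : ∀ x ∈ Ioo a 1, HasDerivAt v (w 1 x) x := by simpa [w] using hw' 0
  refine eqOn_zero_of_degenerate_ode (g := w 1) (h := w 2) (by linarith)
    (hv.continuousOn.mono hsub) (hw 1) (hw 2) hv' (hw' 1) (by simpa using hflat 0) (hflat 1) hK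
    (fun x hx => one_sub_mul_norm_le_of_dual_ode ha (Ioo_subset_Icc_self hx)
      (hMQ x (Ioo_subset_Icc_self hx)) (hMR x (Ioo_subset_Icc_self hx))
      (by simpa [w] using hpoly (hsub (Ioo_subset_Icc_self hx))))
    ((Nat.le_ceil _).trans_lt (lt_add_one _)) (C := M / (n + 1).factorial) (by positivity)
    fun x hx => norm_le_div_factorial_mul_pow_of_flat hw hw' hflat 1 (n + 1)
      (by rwa [Nat.add_comm 1]) hx

/-- if `Re λ ≥ 1/2` and `v ∈ C^∞[0,1]` solves the dual eigenvalue equation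
with potential `Ṽ` on `(0,1)` and `v(1) = 0`, then `v` vanishes identically on `[0,1]`. -/
theorem stmt_13 (lam : ℂ) (hlam : (1:ℝ)/2 ≤ lam.re) (v : ℝ → ℂ)
    (hv : ContDiffOn ℝ (⊤ : ℕ∞) v (Set.Icc 0 1))
    (hode : ∀ ρ ∈ Set.Ioo (0:ℝ) 1,
      -(1 - (ρ:ℂ) ^ 2) * deriv (deriv v) ρ
      - (2 * (1 - (ρ:ℂ) ^ 2) / (ρ:ℂ)) * deriv v ρ
      + 2 * lam * (ρ:ℂ) * deriv v ρ
      + (((Vdual ρ : ℝ) : ℂ) / (ρ:ℂ) ^ 2) * v ρ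
      + lam * (lam + 1) * v ρ = 0)
    (hb : v 1 = 0) :
    ∀ ρ ∈ Set.Icc (0:ℝ) 1, v ρ = 0 := by
  have hpoly := dual_ode_polynomial_form hv hode
  have hres (k : ℕ) : (k : ℂ) * 4 + dualQ lam 1 ≠ 0 := fun h => by
    have := congrArg Complex.re h
    simp [dualQ] at this
    linarith [(k.cast_nonneg : (0 : ℝ) ≤ k)]
  have hflat := iteratedDerivWithin_eq_zero_of_ode (uniqueDiffOn_Icc zero_lt_one)
    ⟨zero_le_one, le_rfl⟩ contDiff_dualP.contDiffOn (contDiff_dualQ lam).contDiffOn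
    (contDiff_dualR lam).contDiffOn hv hpoly (by simp [dualP])
    hasDerivAt_dualP_one.hasDerivWithinAt hres hb
  have hIoo : EqOn v 0 (Ioo 0 1) := fun x hx =>
    dual_eqOn_zero_of_flat hv hpoly hflat hx.1 hx.2.le ⟨le_rfl, hx.2.le⟩
  exact fun ρ hρ => hIoo.of_subset_closure hv.continuousOn continuousOn_const Ioo_subset_Icc_self
    (by rw [closure_Ioo zero_ne_one]) hρ
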